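/- arXiv:1905.08561 — 4 statements merged into one kernel-verified Lean document; each statement's English description precedes it below -/
import Mathlib

section
/- For n = pq with p, q distinct primes of the same bit length (hence gcd(n, φ(n)) = 1), the Paillier decryption is correct: for any 0 ≤ m < n and r coprime to n, L(c^φ(n) mod n²) · φ(n)^{-1} ≡ m (mod n), where c = (1+n)^m · r^n mod n² and L(x) = (x-1)/n. -/
lemma binom_mod_sq (n : ℕ) : ∀ k : ℕ, (1 + n) ^ k ≡ 1 + k * n [MOD n ^ 2] := by
  intro k
  induction k with
  | zero => simpa using Nat.ModEq.refl 1
  | succ k ih =>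
    calc (1 + n) ^ (k + 1) = (1 + n) ^ k * (1 + n) := by ring
      _ ≡ (1 + k * n) * (1 + n) [MOD n ^ 2] := ih.mul_right _
      _ = (1 + (k + 1) * n) + k * n ^ 2 := by ring
      _ ≡ (1 + (k + 1) * n) + 0 [MOD n ^ 2] := by
          exact Nat.ModEq.add_left _ ((Nat.modEq_zero_iff_dvd).mpr ⟨k, by ring⟩)
      _ = 1 + (k + 1) * n := by ring

/-- Paillier decryption correctness. -/
theorem paillier_decryption_correct
    (p q : ℕ) (hp : p.Prime) (hq : q.Prime) (hpq : p ≠ q)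
    (n : ℕ) (hn : n = p * q) (hco : Nat.Coprime n n.totient)
    (m : ℕ) (hm : m < n) (r : ℕ) (hr : Nat.Coprime r n)
    (μ : ℕ) (hμ : μ * n.totient ≡ 1 [MOD n])
    (c : ℕ) (hc : c = ((1 + n) ^ m * r ^ n) % n ^ 2) :
    (c ^ n.totient % n ^ 2 - 1) / n * μ ≡ m [MOD n] := by
  have hn1 : 1 < n := by
    rw [hn]
    calc 1 < 2 * 2 := by norm_num
      _ ≤ p * q := Nat.mul_le_mul hp.two_le hq.two_le
  have hn0 : 0 < n := lt_trans one_pos hn1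
  set φ := n.totient with hφ
  -- totient of n^2
  have hcopq : Nat.Coprime p q := (Nat.coprime_primes hp hq).mpr hpq
  have htot2 : (n ^ 2).totient = n * φ := by
    have h1 : (p ^ 2).totient = p * p.totient := by
      have := Nat.totient_mul_of_prime_of_dvd hp (dvd_refl p)
      simpa [sq] using this
    have h2 : (q ^ 2).totient = q * q.totient := by
      have := Nat.totient_mul_of_prime_of_dvd hq (dvd_refl q)
      simpa [sq] using this
    have hn2 : n ^ 2 = p ^ 2 * q ^ 2 := by rw [hn]; ring
    have hcop2 : Nat.Coprime (p ^ 2) (q ^ 2) := Nat.Coprime.pow 2 2 hcopq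
    rw [hn2, Nat.totient_mul hcop2, h1, h2, hφ, hn,
      Nat.totient_mul hcopq]
    ring
  -- r ^ (n * φ) ≡ 1 mod n^2
  have hrn2 : Nat.Coprime r (n ^ 2) := hr.pow_right 2
  have hrpow : r ^ (n * φ) ≡ 1 [MOD n ^ 2] := by
    have := Nat.ModEq.pow_totient hrn2
    rwa [htot2] at this
  -- c ^ φ ≡ 1 + m*φ*n mod n^2
  have hcmod : c ≡ (1 + n) ^ m * r ^ n [MOD n ^ 2] := by
    rw [hc]; exact Nat.mod_modEq _ _
  have hkey : c ^ φ ≡ 1 + m * φ * n [MOD n ^ 2] := by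
    calc c ^ φ ≡ ((1 + n) ^ m * r ^ n) ^ φ [MOD n ^ 2] := hcmod.pow _
      _ = (1 + n) ^ (m * φ) * r ^ (n * φ) := by rw [mul_pow, ← pow_mul, ← pow_mul]
      _ ≡ (1 + m * φ * n) * 1 [MOD n ^ 2] :=
          Nat.ModEq.mul (binom_mod_sq n (m * φ)) hrpow
      _ = 1 + m * φ * n := by ring
  set t := m * φ % n with ht
  have htlt : t < n := Nat.mod_lt _ hn0
  have ht_eq : m * φ ≡ t [MOD n] := (Nat.mod_modEq _ _).symm
  have hkey2 : c ^ φ ≡ 1 + t * n [MOD n ^ 2] := by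
    refine hkey.trans (Nat.ModEq.add_left 1 ?_)
    have := ht_eq.mul_right' (c := n)
    simpa [sq] using this
  have hlt : 1 + t * n < n ^ 2 := by nlinarith [htlt, hn1]
  have hmod : c ^ φ % n ^ 2 = 1 + t * n := by
    have := hkey2.symm
    rw [Nat.ModEq] at this
    rw [← this, Nat.mod_eq_of_lt hlt]
  rw [hmod]
  have hL : (1 + t * n - 1) / n = t := by
    simp [Nat.mul_div_cancel _ hn0]
  rw [hL]
  calc t * μ ≡ m * φ * μ [MOD n] := (ht_eq.symm).mul_right μ
    _ = m * (μ * φ) := by ring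
    _ ≡ m * 1 [MOD n] := hμ.mul_left m
    _ = m := by ring
end

section
/- Deleting file index f_i from a keyword whose y-bit string has i-th bit 1 is correct: if 0 ≤ a < 2^y, i < y, and a.testBit i = true, then adding the two's complement 2^y - 2^i modulo 2^y yields a - 2^i, which has i-th bit 0 and agrees with a on all other bits below y. -/
lemma testBit_sub_pow {a i : ℕ} (hbit : a.testBit i = true) (j : ℕ) :
    (a - 2 ^ i).testBit j = if j = i then false else a.testBit j := by
  set q := a / 2 ^ (i + 1) with hq
  set r := a % 2 ^ (i + 1) with hrdef
  have hr : r < 2 ^ (i + 1) := Nat.mod_lt _ (by positivity)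
  have ha : a = 2 ^ (i + 1) * q + r := (Nat.div_add_mod a (2 ^ (i + 1))).symm
  have hrbit : r.testBit i = true := by
    rw [hrdef, Nat.testBit_mod_two_pow]
    simp [hbit]
  have hsle : 2 ^ i ≤ r := Nat.ge_two_pow_of_testBit hrbit
  set s := r - 2 ^ i with hsdef
  have hpow : 2 ^ (i + 1) = 2 ^ i + 2 ^ i := by ring
  have hs2 : s < 2 ^ i := by omega
  have hsub : a - 2 ^ i = 2 ^ (i + 1) * q + s := by omega
  have har : r = 2 ^ i + s := by omega
  rw [hsub, Nat.testBit_two_pow_mul_add _ (show s < 2 ^ (i + 1) by omega) j]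
  conv_rhs => rw [ha, Nat.testBit_two_pow_mul_add _ hr j]
  rcases lt_trichotomy j i with h | h | h
  · simp only [if_neg h.ne, if_pos (by omega : j < i + 1)]
    rw [har, Nat.testBit_two_pow_add_gt h]
  · subst h
    simp only [if_pos rfl, if_pos (by omega : j < j + 1)]
    exact (Nat.testBit_lt_two_pow hs2).symm ▸ rfl
  · simp only [if_neg h.ne', if_neg (by omega : ¬ j < i + 1)]

/-- Deleting file index f_i from a y-bit string with i-th bit 1 via two's complement
addition is correct. -/
theorem delete_file_index (y i a : ℕ) (ha : a < 2 ^ y) (hi : i < y)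
    (hbit : a.testBit i = true) :
    (a + (2 ^ y - 2 ^ i)) % 2 ^ y = a - 2 ^ i ∧
      (a - 2 ^ i).testBit i = false ∧
      ∀ j, j < y → j ≠ i → (a - 2 ^ i).testBit j = a.testBit j := by
  have h2i : 2 ^ i ≤ a := Nat.ge_two_pow_of_testBit hbit
  have hiy : 2 ^ i ≤ 2 ^ y := Nat.pow_le_pow_right (by norm_num) hi.le
  refine ⟨?_, ?_, ?_⟩
  · have key : ∀ A B c : ℕ, B ≤ c → B ≤ A → c + (A - B) = A + (c - B) := by
      intro A B c h1 h2; omega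
    rw [key _ _ _ h2i hiy, Nat.add_mod_left,
      Nat.mod_eq_of_lt (lt_of_le_of_lt (Nat.sub_le _ _) ha)]
  · simp [testBit_sub_pow hbit]
  · intro j _ hj
    simp [testBit_sub_pow hbit, hj]
end

section
/- The in-order counter assignment TAssignSub assigns distinct labels to distinct nodes of a binary tree: after an in-order traversal that increments a counter at each visited node, the labeling function is injective, and the labels of any subtree form a contiguous interval of integers. -/
inductive BTree where
  | leaf : BTree
  | node : BTree → BTree → BTree

/-- In-order traversal listing node positions (paths from the root,
false = left, true = right); the in-order label of a node is its index here. -/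
def BTree.inorderPos : BTree → List (List Bool)
  | .leaf => [[]]
  | .node l r =>
      (BTree.inorderPos l).map (List.cons false) ++ [[]] ++
        (BTree.inorderPos r).map (List.cons true)

/-!
The in-order list of `node l r` is the list of `l` tagged with `false`, the root, then the list
of `r` tagged with `true`. Positions extending `false :: q` therefore occur only in the first
block, where by induction they occupy an interval; symmetrically for `true :: q`, and every
position extends `[]`.
-/

namespace List

variable {α β : Type*}

def IndicesFormInterval (P : α → Prop) (L : List α) : Prop :=
  ∃ a b : ℕ, ∀ i (hi : i < L.length), P L[i] ↔ a ≤ i ∧ i < b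

namespace IndicesFormInterval

variable {P : α → Prop} {L L₁ L₂ : List α}

theorem of_forall (h : ∀ x ∈ L, P x) : IndicesFormInterval P L :=
  ⟨0, L.length, fun i hi => by simpa [hi] using h _ (getElem_mem hi)⟩

theorem singleton (x : α) : IndicesFormInterval P [x] := by
  by_cases hx : P x
  · exact of_forall (by simpa using hx)
  · exact ⟨0, 0, fun i hi => by simp_all⟩

theorem map {f : β → α} {L : List β} (h : IndicesFormInterval (fun x => P (f x)) L) :
    IndicesFormInterval P (L.map f) := by
  obtain ⟨a, b, h⟩ := h
  exact ⟨a, b, fun i hi => by simpa using h i (by simpa using hi)⟩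

theorem append_left (h : IndicesFormInterval P L₁) (h₂ : ∀ x ∈ L₂, ¬ P x) :
    IndicesFormInterval P (L₁ ++ L₂) := by
  obtain ⟨a, b, h⟩ := h
  refine ⟨min a L₁.length, min b L₁.length, fun i hi => ?_⟩
  rcases lt_or_ge i L₁.length with hi₁ | hi₁
  · rw [getElem_append_left hi₁, h i hi₁]
    omega
  · rw [getElem_append_right hi₁]
    exact iff_of_false (h₂ _ (getElem_mem _)) (by omega)

theorem append_right (h₁ : ∀ x ∈ L₁, ¬ P x) (h : IndicesFormInterval P L₂) :
    IndicesFormInterval P (L₁ ++ L₂) := by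
  obtain ⟨a, b, h⟩ := h
  refine ⟨a + L₁.length, b + L₁.length, fun i hi => ?_⟩
  rcases lt_or_ge i L₁.length with hi₁ | hi₁
  · rw [getElem_append_left hi₁]
    exact iff_of_false (h₁ _ (getElem_mem hi₁)) (by omega)
  · rw [getElem_append_right hi₁, h _ (by simp at hi; omega)]
    omega

end IndicesFormInterval

end List

namespace BTree

open List

theorem nodup_inorderPos (t : BTree) : t.inorderPos.Nodup := by
  induction t with
  | leaf => simp [inorderPos]
  | node l r ihl ihr =>
    simp only [inorderPos, nodup_append, ihl.map cons_injective, ihr.map cons_injective,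
      nodup_singleton, true_and]
    grind

theorem indicesFormInterval_prefix_inorderPos (t : BTree) (p : List Bool) :
    IndicesFormInterval (p <+: ·) t.inorderPos := by
  induction t generalizing p with
  | leaf => exact .singleton _
  | node l r ihl ihr =>
    match p with
    | [] => exact .of_forall fun _ _ => nil_prefix
    | false :: q =>
      refine .append_left (.append_left (.map ?_) (by simp)) (by simp)
      simpa only [cons_prefix_cons, true_and] using ihl q
    | true :: q =>
      rw [inorderPos, append_assoc]
      refine .append_right (by simp) (.append_right (by simp) (.map ?_))
      simpa only [cons_prefix_cons, true_and] using ihr q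

end BTree

/-- In-order counter assignment gives distinct labels to distinct nodes, and the
labels of any subtree (nodes whose position has a given prefix) form a
contiguous interval. -/
theorem inorder_labels (t : BTree) :
    (BTree.inorderPos t).Nodup ∧
    ∀ p : List Bool, ∃ a b : ℕ,
      ∀ i, i < (BTree.inorderPos t).length →
        ((p <+: (BTree.inorderPos t)[i]!) ↔ (a ≤ i ∧ i < b)) := by
  refine ⟨t.nodup_inorderPos, fun p => ?_⟩
  obtain ⟨a, b, h⟩ := t.indicesFormInterval_prefix_inorderPos p
  exact ⟨a, b, fun i hi => by rw [getElem!_pos _ i hi]; exact h i hi⟩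
end

section
/- Decryption correctness of Construction B updates: starting from ciphertext of bit string 0, after any sequence of valid add/delete operations (adding 2^i for an add of file i not currently present, adding 2^y - 2^i mod 2^y for a delete of file i currently present), the Paillier-decrypted value modulo 2^y equals the encoding of the current set of present files, provided 2^y < n and fewer than n/2^y total operations are performed. -/
/-!
Each update changes the plaintext by the change of the encoding `∑ i ∈ S, 2 ^ i`, up to a
multiple of `2 ^ y`: an add contributes `2 ^ i` exactly, a delete `2 ^ y - 2 ^ i`, which overshoots
by `2 ^ y`. Every summand is at most `2 ^ y`, so with fewer than `n / 2 ^ y` operations the sum never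
wraps around modulo `n`; and the encoding of a set of indices below `y` is itself below `2 ^ y`.
-/

/-- The set of present files after one update operation
(`(true, i)` adds file i, `(false, i)` deletes file i). -/
def applySet (S : Finset ℕ) : Bool × ℕ → Finset ℕ
  | (true, i) => insert i S
  | (false, i) => S.erase i

/-- The plaintext added homomorphically for one operation on y-bit strings:
2^i for an addition, the two's complement 2^y - 2^i for a deletion. -/
def delta (y : ℕ) : Bool × ℕ → ℕ
  | (true, i) => 2 ^ i
  | (false, i) => 2 ^ y - 2 ^ i

/-- Validity of a sequence of operations: each add concerns a file not present,
each delete a file present, and all file indices are below y. -/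
def ValidOps (y : ℕ) : Finset ℕ → List (Bool × ℕ) → Prop
  | _, [] => True
  | S, op :: ops =>
      op.2 < y ∧ (if op.1 then op.2 ∉ S else op.2 ∈ S) ∧ ValidOps y (applySet S op) ops

lemma delta_le_two_pow {y : ℕ} {op : Bool × ℕ} (h : op.2 ≤ y) : delta y op ≤ 2 ^ y := by
  obtain ⟨_ | _, i⟩ := op
  · exact Nat.sub_le _ _
  · exact Nat.pow_le_pow_right two_pos h

lemma sum_two_pow_add_delta_modEq {y : ℕ} {S : Finset ℕ} {op : Bool × ℕ} (hop : op.2 < y)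
    (hmem : if op.1 then op.2 ∉ S else op.2 ∈ S) :
    ∑ k ∈ S, 2 ^ k + delta y op ≡ ∑ k ∈ applySet S op, 2 ^ k [MOD 2 ^ y] := by
  obtain ⟨_ | _, i⟩ := op
  · have hi : 2 ^ i ≤ 2 ^ y := Nat.pow_le_pow_right two_pos hop.le
    calc ∑ k ∈ S, 2 ^ k + delta y (false, i)
        = ∑ k ∈ S.erase i, 2 ^ k + 2 ^ y := by
          rw [← Finset.sum_erase_add S _ (a := i) hmem, delta, add_assoc, Nat.add_sub_cancel' hi]
      _ ≡ ∑ k ∈ S.erase i, 2 ^ k [MOD 2 ^ y] := Nat.add_modEq_right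
  · rw [applySet, Finset.sum_insert (hmem : i ∉ S), delta, add_comm]

namespace ValidOps

variable {y : ℕ} {S : Finset ℕ} {ops : List (Bool × ℕ)}

lemma lt_of_mem (h : ValidOps y S ops) : ∀ op ∈ ops, op.2 < y := by
  induction ops generalizing S with
  | nil => simp
  | cons op ops ih =>
    obtain ⟨hop, -, hrest⟩ := h
    exact List.forall_mem_cons.mpr ⟨hop, ih hrest⟩

lemma foldl_applySet_lt (h : ValidOps y S ops) (hS : ∀ k ∈ S, k < y) :
    ∀ k ∈ ops.foldl applySet S, k < y := by
  induction ops generalizing S with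
  | nil => exact hS
  | cons op ops ih =>
    obtain ⟨hop, -, hrest⟩ := h
    refine ih hrest ?_
    obtain ⟨_ | _, i⟩ := op
    · exact fun k hk => hS k (Finset.mem_of_mem_erase hk)
    · simpa [applySet, hop] using hS

lemma sum_map_delta_le (h : ValidOps y S ops) : (ops.map (delta y)).sum ≤ ops.length * 2 ^ y := by
  simpa using List.sum_le_card_nsmul _ _
    (List.forall_mem_map.mpr fun op hop => delta_le_two_pow (h.lt_of_mem op hop).le)

lemma sum_two_pow_add_sum_map_delta_modEq (h : ValidOps y S ops) :
    ∑ k ∈ S, 2 ^ k + (ops.map (delta y)).sum ≡ ∑ k ∈ ops.foldl applySet S, 2 ^ k [MOD 2 ^ y] := by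
  induction ops generalizing S with
  | nil => simp [Nat.ModEq.refl]
  | cons op ops ih =>
    obtain ⟨hop, hmem, hrest⟩ := h
    rw [List.map_cons, List.sum_cons, ← add_assoc]
    exact ((sum_two_pow_add_delta_modEq hop hmem).add_right _).trans (ih hrest)

end ValidOps

theorem constructionB_update_correct_general (n y : ℕ) (ops : List (Bool × ℕ))
    (hvalid : ValidOps y ∅ ops) (hlen : ops.length < n / 2 ^ y) :
    ((ops.map (delta y)).sum % n) % 2 ^ y = ∑ i ∈ ops.foldl applySet ∅, 2 ^ i := by
  have hsum_lt : (ops.map (delta y)).sum < n :=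
    hvalid.sum_map_delta_le.trans_lt <|
      (Nat.mul_lt_mul_of_pos_right hlen (Nat.two_pow_pos y)).trans_le (Nat.div_mul_le_self n _)
  have hmodEq := hvalid.sum_two_pow_add_sum_map_delta_modEq
  rw [Finset.sum_empty, zero_add] at hmodEq
  rw [Nat.mod_eq_of_lt hsum_lt, hmodEq,
    Nat.mod_eq_of_lt (Nat.geomSum_lt le_rfl (hvalid.foldl_applySet_lt (by simp)))]

/-- Decryption correctness of Construction B: starting from an encryption of 0,
after any valid sequence of homomorphic add/delete operations (with plaintexts in
ℤ_n, 2^y < n and fewer than n / 2^y operations), the decrypted value reduced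
modulo 2^y is the bit-string encoding of the current set of present files. -/
theorem constructionB_update_correct (n y : ℕ) (ops : List (Bool × ℕ))
    (hyn : 2 ^ y < n) (hvalid : ValidOps y ∅ ops) (hlen : ops.length < n / 2 ^ y) :
    ((ops.map (delta y)).sum % n) % 2 ^ y = ∑ i ∈ ops.foldl applySet ∅, 2 ^ i :=
  constructionB_update_correct_general n y ops hvalid hlen
end
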